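/- arXiv:1606.07148 — 2 statements merged into one kernel-verified Lean document; each statement's English description precedes it below -/
import Mathlib

section
/- There exists a unique family of rational functions Z_k(a) over ℚ(ε₁, ε₂) (k ≥ 0) satisfying Z₀ = 1 and the Zamolodchikov recursion Z_k(a) = −Σ_{mn ≤ k, m,n ≥ 1} R_{m,n} Z_{k−mn}(mε₁ − nε₂) / ((a − mε₁ − nε₂)(a + mε₁ + nε₂)), where R_{m,n} is the standard residue factor; each Z_k is an even rational function of a whose poles (in a) lie in the set {±(mε₁ + nε₂) : m, n ≥ 1, mn ≤ k} and are at most simple. -/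
set_option maxHeartbeats 1000000
set_option synthInstance.maxHeartbeats 1000000


/-- The field `ℚ(ε₁, ε₂)`, realized as `ℚ(ε₁)(ε₂)`. -/
abbrev NekF : Type := RatFunc (RatFunc ℚ)

/-- The variable `ε₁` in `ℚ(ε₁, ε₂)`. -/
noncomputable def nekE1 : NekF := RatFunc.C RatFunc.X

/-- The variable `ε₂` in `ℚ(ε₁, ε₂)`. -/
noncomputable def nekE2 : NekF := RatFunc.X

/-- The standard Zamolodchikov residue factor `R_{m,n} = 2 ∏ 1/(iε₁ + jε₂)`,
the product over `(i,j) ∈ [−m+1, m] × [−n+1, n] ∖ {(0,0), (m,n)}`. -/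
noncomputable def nekR (m n : ℕ) : NekF :=
  2 * ∏ p ∈ (((Finset.Icc (-(m : ℤ) + 1) m) ×ˢ (Finset.Icc (-(n : ℤ) + 1) n)).erase
      (0, 0)).erase ((m : ℤ), (n : ℤ)), ((p.1 : NekF) * nekE1 + (p.2 : NekF) * nekE2)⁻¹

/-- Pairs `(m,n)` with `m, n ≥ 1` and `mn ≤ k`. -/
def nekPairs (k : ℕ) : Finset (ℕ × ℕ) :=
  ((Finset.Icc 1 k) ×ˢ (Finset.Icc 1 k)).filter fun p => p.1 * p.2 ≤ k

/-- `Z₀ = 1` together with the Zamolodchikov recursion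
`Z_k(a) = −Σ_{mn ≤ k, m,n ≥ 1} R_{m,n} Z_{k−mn}(mε₁ − nε₂)
          / ((a − mε₁ − nε₂)(a + mε₁ + nε₂))`,
for rational functions `Z_k(a)` over `ℚ(ε₁, ε₂)` (here `a = X`). -/
noncomputable def nekRec (Z : ℕ → RatFunc NekF) : Prop :=
  Z 0 = 1 ∧ ∀ k, 1 ≤ k → Z k =
    -∑ p ∈ nekPairs k,
      RatFunc.C (nekR p.1 p.2 *
          RatFunc.eval (RingHom.id NekF)
            ((p.1 : NekF) * nekE1 - (p.2 : NekF) * nekE2) (Z (k - p.1 * p.2))) /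
        ((RatFunc.X - RatFunc.C ((p.1 : NekF) * nekE1 + (p.2 : NekF) * nekE2)) *
          (RatFunc.X + RatFunc.C ((p.1 : NekF) * nekE1 + (p.2 : NekF) * nekE2)))

set_option maxHeartbeats 2000000
set_option synthInstance.maxHeartbeats 2000000

instance : IsDomain (RatFunc NekF) := inferInstance

instance : NoZeroDivisors (RatFunc NekF) := by exact IsDomain.to_noZeroDivisors (RatFunc NekF)

lemma nekPairs_lt {k : ℕ} {p : ℕ × ℕ} (hp : p ∈ nekPairs k) (hk : 1 ≤ k) :
    k - p.1 * p.2 < k := by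
  simp only [nekPairs, Finset.mem_filter, Finset.mem_product, Finset.mem_Icc] at hp
  have h1 : 1 ≤ p.1 * p.2 := Nat.mul_pos hp.1.1.1 hp.1.2.1
  exact Nat.sub_lt hk h1

/-- The solution of the recursion, defined by strong recursion. -/
noncomputable def nekZ : ℕ → RatFunc NekF
  | 0 => 1
  | (k+1) =>
    -∑ p ∈ (nekPairs (k+1)).attach,
      RatFunc.C (nekR p.1.1 p.1.2 *
          RatFunc.eval (RingHom.id NekF)
            ((p.1.1 : NekF) * nekE1 - (p.1.2 : NekF) * nekE2)
            (nekZ (k + 1 - p.1.1 * p.1.2))) /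
        ((RatFunc.X - RatFunc.C ((p.1.1 : NekF) * nekE1 + (p.1.2 : NekF) * nekE2)) *
          (RatFunc.X + RatFunc.C ((p.1.1 : NekF) * nekE1 + (p.1.2 : NekF) * nekE2)))
  decreasing_by exact nekPairs_lt p.2 (Nat.succ_le_succ (Nat.zero_le _))

lemma nekRec_nekZ : nekRec nekZ := by
  constructor
  · rw [nekZ]
  · intro k hk
    obtain ⟨j, rfl⟩ : ∃ j, k = j + 1 := ⟨k - 1, (Nat.succ_pred_eq_of_pos hk).symm⟩
    rw [nekZ]
    congr 1
    exact Finset.sum_attach (nekPairs (j + 1)) fun q =>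
      RatFunc.C (nekR q.1 q.2 *
          RatFunc.eval (RingHom.id NekF)
            ((q.1 : NekF) * nekE1 - (q.2 : NekF) * nekE2)
            (nekZ (j + 1 - q.1 * q.2))) /
        ((RatFunc.X - RatFunc.C ((q.1 : NekF) * nekE1 + (q.2 : NekF) * nekE2)) *
          (RatFunc.X + RatFunc.C ((q.1 : NekF) * nekE1 + (q.2 : NekF) * nekE2)))

lemma nekRec_unique {Z W : ℕ → RatFunc NekF} (hZ : nekRec Z) (hW : nekRec W) : Z = W := by
  funext k
  induction k using Nat.strong_induction_on with
  | _ k ih =>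
    rcases Nat.eq_zero_or_pos k with rfl | hk
    · rw [hZ.1, hW.1]
    · rw [hZ.2 k hk, hW.2 k hk]
      congr 1
      refine Finset.sum_congr rfl fun p hp => ?_
      rw [ih _ (nekPairs_lt hp hk)]

/-- The involution `a ↦ -a` on polynomials. -/
noncomputable def nekTau : Polynomial NekF →+* Polynomial NekF :=
  Polynomial.eval₂RingHom Polynomial.C (-Polynomial.X)

lemma nekTau_apply (p : Polynomial NekF) : nekTau p = p.comp (-Polynomial.X) := rfl

lemma nekTau_tau (p : Polynomial NekF) : nekTau (nekTau p) = p := by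
  simp only [nekTau_apply, Polynomial.comp_assoc, Polynomial.neg_comp, Polynomial.X_comp,
    neg_neg, Polynomial.comp_X]

lemma nekTau_ne_zero {p : Polynomial NekF} (hp : p ≠ 0) : nekTau p ≠ 0 := by
  intro h
  apply hp
  rw [← nekTau_tau p, h, map_zero]

lemma nekTau_cond : (nonZeroDivisors (Polynomial NekF)) ≤
    (nonZeroDivisors (RatFunc NekF)).comap
      ((algebraMap (Polynomial NekF) (RatFunc NekF)).comp nekTau) := by
  intro p hp
  rw [mem_nonZeroDivisors_iff_ne_zero] at hp
  rw [Submonoid.mem_comap, mem_nonZeroDivisors_iff_ne_zero]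
  exact RatFunc.algebraMap_ne_zero (nekTau_ne_zero hp)

/-- The involution `a ↦ -a` on rational functions. -/
noncomputable def nekSigma : RatFunc NekF →+* RatFunc NekF :=
  RatFunc.liftRingHom ((algebraMap (Polynomial NekF) (RatFunc NekF)).comp nekTau) nekTau_cond

lemma nekSigma_algebraMap (p : Polynomial NekF) :
    nekSigma (algebraMap (Polynomial NekF) (RatFunc NekF) p) =
      algebraMap (Polynomial NekF) (RatFunc NekF) (nekTau p) := by
  have e1 : algebraMap (Polynomial NekF) (RatFunc NekF) (1 : Polynomial NekF) = 1 := map_one _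
  calc nekSigma (algebraMap (Polynomial NekF) (RatFunc NekF) p)
      = nekSigma (algebraMap (Polynomial NekF) (RatFunc NekF) p /
          algebraMap (Polynomial NekF) (RatFunc NekF) (1 : Polynomial NekF)) := by
        refine congrArg nekSigma ?_
        rw [e1]
        exact (div_one (algebraMap (Polynomial NekF) (RatFunc NekF) p)).symm
    _ = ((algebraMap (Polynomial NekF) (RatFunc NekF)).comp nekTau) p /
          ((algebraMap (Polynomial NekF) (RatFunc NekF)).comp nekTau) 1 :=
        RatFunc.liftRingHom_apply_div _ nekTau_cond p 1
    _ = algebraMap (Polynomial NekF) (RatFunc NekF) (nekTau p) := by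
        rw [map_one ((algebraMap (Polynomial NekF) (RatFunc NekF)).comp nekTau)]
        exact div_one (((algebraMap (Polynomial NekF) (RatFunc NekF)).comp nekTau) p)

lemma nekSigma_X : nekSigma RatFunc.X = -RatFunc.X := by
  rw [← RatFunc.algebraMap_X, nekSigma_algebraMap]
  have : nekTau Polynomial.X = -Polynomial.X := by
    simp [nekTau]
  rw [this, map_neg, RatFunc.algebraMap_X]

lemma nekSigma_C (a : NekF) : nekSigma (RatFunc.C a) = RatFunc.C a := by
  rw [← RatFunc.algebraMap_C, nekSigma_algebraMap]
  have : nekTau (Polynomial.C a) = Polynomial.C a := by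
    simp [nekTau]
  rw [this]

lemma nekSigma_fixes {Z : ℕ → RatFunc NekF} (hZ : nekRec Z) (k : ℕ) :
    nekSigma (Z k) = Z k := by
  rcases Nat.eq_zero_or_pos k with rfl | hk
  · rw [hZ.1, map_one]
  · rw [hZ.2 k hk, map_neg, map_sum]
    congr 1
    refine Finset.sum_congr rfl fun p hp => ?_
    set A : RatFunc NekF := RatFunc.C (nekR p.1 p.2 *
        RatFunc.eval (RingHom.id NekF)
          ((p.1 : NekF) * nekE1 - (p.2 : NekF) * nekE2) (Z (k - p.1 * p.2))) with hA
    set b : NekF := (p.1 : NekF) * nekE1 + (p.2 : NekF) * nekE2 with hb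
    have hsub : nekSigma (RatFunc.X - RatFunc.C b) = -RatFunc.X - RatFunc.C b := by
      have h := map_sub nekSigma RatFunc.X (RatFunc.C b)
      rw [nekSigma_X, nekSigma_C] at h
      exact h
    have hadd : nekSigma (RatFunc.X + RatFunc.C b) = -RatFunc.X + RatFunc.C b := by
      have h := map_add nekSigma RatFunc.X (RatFunc.C b)
      rw [nekSigma_X, nekSigma_C] at h
      exact h
    have hmul : nekSigma ((RatFunc.X - RatFunc.C b) * (RatFunc.X + RatFunc.C b)) =
        (RatFunc.X - RatFunc.C b) * (RatFunc.X + RatFunc.C b) := by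
      have h := map_mul nekSigma (RatFunc.X - RatFunc.C b) (RatFunc.X + RatFunc.C b)
      rw [hsub, hadd] at h
      refine h.trans ?_
      ring
    calc nekSigma (A / ((RatFunc.X - RatFunc.C b) * (RatFunc.X + RatFunc.C b)))
        = nekSigma A / nekSigma ((RatFunc.X - RatFunc.C b) * (RatFunc.X + RatFunc.C b)) :=
          by have e := map_div₀ nekSigma A ((RatFunc.X - RatFunc.C b) * (RatFunc.X + RatFunc.C b)); exact e
      _ = A / ((RatFunc.X - RatFunc.C b) * (RatFunc.X + RatFunc.C b)) := by
          rw [hmul, hA, nekSigma_C]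

lemma nekEven {r : RatFunc NekF} (h : nekSigma r = r) (x : NekF) :
    RatFunc.eval (RingHom.id NekF) x r = RatFunc.eval (RingHom.id NekF) (-x) r := by
  have hdne : r.denom ≠ 0 := r.denom_ne_zero
  have h1 : algebraMap (Polynomial NekF) (RatFunc NekF) (nekTau r.num) /
      algebraMap (Polynomial NekF) (RatFunc NekF) (nekTau r.denom) =
      algebraMap (Polynomial NekF) (RatFunc NekF) r.num /
      algebraMap (Polynomial NekF) (RatFunc NekF) r.denom := by
    have e := map_div₀ nekSigma (algebraMap (Polynomial NekF) (RatFunc NekF) r.num)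
      (algebraMap (Polynomial NekF) (RatFunc NekF) r.denom)
    rw [RatFunc.num_div_denom, h, nekSigma_algebraMap, nekSigma_algebraMap] at e
    exact e.symm.trans r.num_div_denom.symm
  have key : nekTau r.num * r.denom = r.num * nekTau r.denom := by
    have h2 : algebraMap (Polynomial NekF) (RatFunc NekF) (nekTau r.num) *
        algebraMap (Polynomial NekF) (RatFunc NekF) r.denom =
        algebraMap (Polynomial NekF) (RatFunc NekF) r.num *
        algebraMap (Polynomial NekF) (RatFunc NekF) (nekTau r.denom) :=
      (div_eq_div_iff (G₀ := RatFunc NekF) (RatFunc.algebraMap_ne_zero (nekTau_ne_zero hdne))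
        (RatFunc.algebraMap_ne_zero hdne)).mp h1
    apply RatFunc.algebraMap_injective NekF
    calc algebraMap (Polynomial NekF) (RatFunc NekF) (nekTau r.num * r.denom)
        = algebraMap (Polynomial NekF) (RatFunc NekF) (nekTau r.num) *
          algebraMap (Polynomial NekF) (RatFunc NekF) r.denom := map_mul _ _ _
      _ = algebraMap (Polynomial NekF) (RatFunc NekF) r.num *
          algebraMap (Polynomial NekF) (RatFunc NekF) (nekTau r.denom) := h2
      _ = algebraMap (Polynomial NekF) (RatFunc NekF) (r.num * nekTau r.denom) :=
          (map_mul _ _ _).symm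
  have hco : IsCoprime r.num r.denom := r.isCoprime_num_denom
  have hd1 : r.denom ∣ nekTau r.denom := by
    refine hco.symm.dvd_of_dvd_mul_left ?_
    exact ⟨nekTau r.num, by rw [← key]; ring⟩
  have hd2 : nekTau r.denom ∣ r.denom := by
    refine ((hco.map nekTau).symm.dvd_of_dvd_mul_left ?_)
    exact ⟨r.num, by rw [key]; ring⟩
  obtain ⟨u, hu⟩ := associated_of_dvd_dvd hd1 hd2
  obtain ⟨c, hcu, hcC⟩ := Polynomial.isUnit_iff.mp u.isUnit
  have hc0 : c ≠ 0 := hcu.ne_zero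
  have hdC : nekTau r.denom = Polynomial.C c * r.denom := by
    rw [← hu, ← hcC]
    ring
  have hnC : nekTau r.num = Polynomial.C c * r.num := by
    have h3 : nekTau r.num * r.denom = Polynomial.C c * r.num * r.denom := by
      rw [key, hdC]; ring
    exact mul_right_cancel₀ hdne h3
  have e1 : r.num.eval (-x) = c * r.num.eval x := by
    have h4 := congrArg (Polynomial.eval x) hnC
    rwa [nekTau_apply, Polynomial.eval_comp, Polynomial.eval_neg, Polynomial.eval_X,
      Polynomial.eval_mul, Polynomial.eval_C] at h4
  have e2 : r.denom.eval (-x) = c * r.denom.eval x := by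
    have h4 := congrArg (Polynomial.eval x) hdC
    rwa [nekTau_apply, Polynomial.eval_comp, Polynomial.eval_neg, Polynomial.eval_X,
      Polynomial.eval_mul, Polynomial.eval_C] at h4
  have hev : ∀ (p : Polynomial NekF) (y : NekF),
      Polynomial.eval₂ (RingHom.id NekF) y p = p.eval y := fun p y => rfl
  show Polynomial.eval₂ (RingHom.id NekF) x r.num / Polynomial.eval₂ (RingHom.id NekF) x r.denom
      = Polynomial.eval₂ (RingHom.id NekF) (-x) r.num /
        Polynomial.eval₂ (RingHom.id NekF) (-x) r.denom
  rw [hev, hev, hev, hev, e1, e2]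
  exact (mul_div_mul_left (G₀ := NekF) _ _ hc0).symm

lemma nekPoles {Z : ℕ → RatFunc NekF} (hZ : nekRec Z) (k : ℕ) :
    ∃ P : Polynomial NekF,
      Z k = algebraMap (Polynomial NekF) (RatFunc NekF) P /
        algebraMap (Polynomial NekF) (RatFunc NekF)
          (∏ p ∈ nekPairs k,
            (Polynomial.X ^ 2 -
              Polynomial.C (((p.1 : NekF) * nekE1 + (p.2 : NekF) * nekE2) ^ 2))) := by
  set aM := algebraMap (Polynomial NekF) (RatFunc NekF) with haM
  set f : ℕ × ℕ → Polynomial NekF := fun p =>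
    Polynomial.X ^ 2 - Polynomial.C (((p.1 : NekF) * nekE1 + (p.2 : NekF) * nekE2) ^ 2) with hf
  have hfne : ∀ p, f p ≠ 0 := fun p => Polynomial.X_pow_sub_C_ne_zero (by norm_num) _
  rcases Nat.eq_zero_or_pos k with rfl | hk
  · refine ⟨1, ?_⟩
    have h0 : nekPairs 0 = ∅ := by simp [nekPairs]
    rw [hZ.1, h0, Finset.prod_empty]
    have e1 : aM (1 : Polynomial NekF) = 1 := map_one _
    rw [e1]
    exact (div_one (1 : RatFunc NekF)).symm
  · set c : ℕ × ℕ → NekF := fun p => nekR p.1 p.2 *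
      RatFunc.eval (RingHom.id NekF)
        ((p.1 : NekF) * nekE1 - (p.2 : NekF) * nekE2) (Z (k - p.1 * p.2)) with hc
    set D : Polynomial NekF := ∏ p ∈ nekPairs k, f p with hD
    have hDne : D ≠ 0 := Finset.prod_ne_zero_iff.mpr fun p _ => hfne p
    refine ⟨-∑ p ∈ nekPairs k, Polynomial.C (c p) * ∏ q ∈ (nekPairs k).erase p, f q, ?_⟩
    rw [hZ.2 k hk]
    have hterm : ∀ p ∈ nekPairs k,
        RatFunc.C (c p) /
          ((RatFunc.X - RatFunc.C ((p.1 : NekF) * nekE1 + (p.2 : NekF) * nekE2)) *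
           (RatFunc.X + RatFunc.C ((p.1 : NekF) * nekE1 + (p.2 : NekF) * nekE2))) =
          aM (Polynomial.C (c p) * ∏ q ∈ (nekPairs k).erase p, f q) / aM D := by
      intro p hp
      set b : NekF := (p.1 : NekF) * nekE1 + (p.2 : NekF) * nekE2 with hb
      have hden : (RatFunc.X - RatFunc.C b) * (RatFunc.X + RatFunc.C b) = aM (f p) := by
        have m1 : aM ((Polynomial.X - Polynomial.C b) * (Polynomial.X + Polynomial.C b)) =
            aM (Polynomial.X - Polynomial.C b) * aM (Polynomial.X + Polynomial.C b) :=
          map_mul _ _ _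
        have m2 : aM (Polynomial.X - Polynomial.C b) = RatFunc.X - RatFunc.C b := by
          have := map_sub aM Polynomial.X (Polynomial.C b)
          rwa [RatFunc.algebraMap_X, RatFunc.algebraMap_C] at this
        have m3 : aM (Polynomial.X + Polynomial.C b) = RatFunc.X + RatFunc.C b := by
          have := map_add aM Polynomial.X (Polynomial.C b)
          rwa [RatFunc.algebraMap_X, RatFunc.algebraMap_C] at this
        have m4 : (Polynomial.X - Polynomial.C b) * (Polynomial.X + Polynomial.C b) = f p := by
          have : Polynomial.C (b ^ 2) = (Polynomial.C b) ^ 2 := map_pow _ _ _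
          rw [hf]
          simp only [hb]
          rw [this]
          ring
        rw [← m2, ← m3, ← m1, m4]
      have hCc : RatFunc.C (c p) = aM (Polynomial.C (c p)) := (RatFunc.algebraMap_C _).symm
      rw [hden, hCc]
      refine (div_eq_div_iff (G₀ := RatFunc NekF) (RatFunc.algebraMap_ne_zero (hfne p))
        (RatFunc.algebraMap_ne_zero hDne)).mpr ?_
      calc aM (Polynomial.C (c p)) * aM D = aM (Polynomial.C (c p) * D) := (map_mul _ _ _).symm
        _ = aM ((Polynomial.C (c p) * ∏ q ∈ (nekPairs k).erase p, f q) * f p) := by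
            refine congrArg aM ?_
            rw [mul_assoc, Finset.prod_erase_mul _ _ hp]
        _ = aM (Polynomial.C (c p) * ∏ q ∈ (nekPairs k).erase p, f q) * aM (f p) :=
            map_mul _ _ _
    calc -∑ p ∈ nekPairs k,
          RatFunc.C (nekR p.1 p.2 *
              RatFunc.eval (RingHom.id NekF)
                ((p.1 : NekF) * nekE1 - (p.2 : NekF) * nekE2) (Z (k - p.1 * p.2))) /
            ((RatFunc.X - RatFunc.C ((p.1 : NekF) * nekE1 + (p.2 : NekF) * nekE2)) *
             (RatFunc.X + RatFunc.C ((p.1 : NekF) * nekE1 + (p.2 : NekF) * nekE2)))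
        = -∑ p ∈ nekPairs k,
            aM (Polynomial.C (c p) * ∏ q ∈ (nekPairs k).erase p, f q) / aM D := by
          exact congrArg Neg.neg (Finset.sum_congr rfl hterm)
      _ = -((∑ p ∈ nekPairs k,
            aM (Polynomial.C (c p) * ∏ q ∈ (nekPairs k).erase p, f q)) / aM D) := by
          exact congrArg Neg.neg (Finset.sum_div (K := RatFunc NekF) _ _ _).symm
      _ = -(aM (∑ p ∈ nekPairs k,
            Polynomial.C (c p) * ∏ q ∈ (nekPairs k).erase p, f q) / aM D) := by
          refine congrArg Neg.neg ?_
          refine congrArg (· / aM D) ?_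
          exact (map_sum aM _ _).symm
      _ = aM (-∑ p ∈ nekPairs k,
            Polynomial.C (c p) * ∏ q ∈ (nekPairs k).erase p, f q) / aM D := by
          rw [map_neg]
          exact (neg_div (R := RatFunc NekF) _ _).symm

/-- There is a unique family `Z_k(a)` of rational functions over `ℚ(ε₁,ε₂)`
with `Z₀ = 1` satisfying the Zamolodchikov recursion; each `Z_k` is even in
`a`, and its poles in `a` are at most simple and lie in
`{±(mε₁ + nε₂) : m, n ≥ 1, mn ≤ k}`. -/
theorem stmt_9 :
    (∃! Z : ℕ → RatFunc NekF, nekRec Z) ∧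
    ∀ Z : ℕ → RatFunc NekF, nekRec Z →
      (∀ k, ∀ x : NekF,
          RatFunc.eval (RingHom.id NekF) x (Z k) =
            RatFunc.eval (RingHom.id NekF) (-x) (Z k)) ∧
      (∀ k, ∃ P : Polynomial NekF,
          Z k = algebraMap (Polynomial NekF) (RatFunc NekF) P /
            algebraMap (Polynomial NekF) (RatFunc NekF)
              (∏ p ∈ nekPairs k,
                (Polynomial.X ^ 2 -
                  Polynomial.C (((p.1 : NekF) * nekE1 + (p.2 : NekF) * nekE2) ^ 2)))) := by
  refine ⟨⟨nekZ, nekRec_nekZ, fun W hW => nekRec_unique hW nekRec_nekZ⟩, fun Z hZ => ⟨?_, ?_⟩⟩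
  · exact fun k x => nekEven (nekSigma_fixes hZ k) x
  · exact nekPoles hZ
end

section
/- For each nonnegative integer n ≥ 1, the number of triples (p,q,r) of nonnegative integers with p + q + r odd satisfying the strict triangle inequalities and (2(pq+pr+qr) − p² − q² − r² + 1)/4 = n equals 3·H(4n − 1), where H is the Hurwitz class number; in particular for n = 1 there are exactly 3·H(3) = 1 such triples, namely (p,q,r) = (1,1,1). -/
/-- `(a, b, c)` is a reduced positive definite integral binary quadratic form
of discriminant `−n`. -/
def IsReducedForm (n : ℕ) (t : ℤ × ℤ × ℤ) : Prop :=
  t.2.1 ^ 2 - 4 * t.1 * t.2.2 = -(n : ℤ) ∧ 0 < t.1 ∧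
    |t.2.1| ≤ t.1 ∧ t.1 ≤ t.2.2 ∧
    ((|t.2.1| = t.1 ∨ t.1 = t.2.2) → 0 ≤ t.2.1)

/-- The weight of a reduced form: `1/3` for multiples of `x² + xy + y²`,
`1/2` for multiples of `x² + y²`, and `1` otherwise. -/
def formWeight (t : ℤ × ℤ × ℤ) : ℚ :=
  if t.1 = t.2.1 ∧ t.1 = t.2.2 then 1/3
  else if t.2.1 = 0 ∧ t.1 = t.2.2 then 1/2
  else 1

/-- The Hurwitz class number `H(n)`. -/
noncomputable def hurwitzH (n : ℕ) : ℚ :=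
  if n = 0 then -1/12
  else ∑ᶠ t ∈ {t : ℤ × ℤ × ℤ | IsReducedForm n t}, formWeight t

/-- The odd (`c₁ = 1`) flux triples on `ℙ²` with instanton exponent `n`:
nonnegative integers, odd sum, strict triangle inequalities, and
`(2(pq+pr+qr) − p² − q² − r² + 1)/4 = n`. -/
def oddTriples (n : ℕ) : Set (ℤ × ℤ × ℤ) :=
  {t | 0 ≤ t.1 ∧ 0 ≤ t.2.1 ∧ 0 ≤ t.2.2 ∧ Odd (t.1 + t.2.1 + t.2.2) ∧
    t.2.2 < t.1 + t.2.1 ∧ t.2.1 < t.1 + t.2.2 ∧ t.1 < t.2.1 + t.2.2 ∧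
    2 * (t.1 * t.2.1 + t.1 * t.2.2 + t.2.1 * t.2.2)
      - t.1 ^ 2 - t.2.1 ^ 2 - t.2.2 ^ 2 + 1 = 4 * (n : ℤ)}

/-! ### Auxiliary machinery -/

/-- Rotate a triple. -/
def rot3 : ℤ × ℤ × ℤ → ℤ × ℤ × ℤ
  | (a, b, c) => (b, c, a)

/-- The three cyclic rotations of a triple, as a finset. -/
def cyc3 (u : ℤ × ℤ × ℤ) : Finset (ℤ × ℤ × ℤ) := {u, rot3 u, rot3 (rot3 u)}

lemma mem_cyc3 {t u : ℤ × ℤ × ℤ} :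
    t ∈ cyc3 u ↔ t = u ∨ t = rot3 u ∨ t = rot3 (rot3 u) := by
  simp [cyc3]

/-- The map sending a reduced form to the three (cyclic or anticyclic,
according to the sign of the middle coefficient) rotations of the
corresponding flux triple. -/
def fmap : ℤ × ℤ × ℤ → Finset (ℤ × ℤ × ℤ)
  | (A, B, C) => if 0 ≤ B then cyc3 (A + C - B, C, A) else cyc3 (C, A + C + B, A)


lemma mem_oddTriples {n : ℕ} {p q r : ℤ} :
    (p, q, r) ∈ oddTriples n ↔ (0 ≤ p ∧ 0 ≤ q ∧ 0 ≤ r ∧ Odd (p + q + r) ∧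
      r < p + q ∧ q < p + r ∧ p < q + r ∧
      2 * (p * q + p * r + q * r) - p ^ 2 - q ^ 2 - r ^ 2 + 1 = 4 * (n : ℤ)) :=
  Iff.rfl

lemma isReducedForm_mk {M : ℕ} {A B C : ℤ} :
    IsReducedForm M (A, B, C) ↔ (B ^ 2 - 4 * A * C = -(M : ℤ) ∧ 0 < A ∧
      |B| ≤ A ∧ A ≤ C ∧ ((|B| = A ∨ A = C) → 0 ≤ B)) :=
  Iff.rfl

lemma cast_M {n : ℕ} (hn : 1 ≤ n) : ((4 * n - 1 : ℕ) : ℤ) = 4 * (n : ℤ) - 1 := by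
  have h : (1 : ℕ) ≤ 4 * n := by omega
  push_cast [h]
  ring

lemma B_odd {M : ℕ} (hM : M % 2 = 1) {A B C : ℤ}
    (h : B ^ 2 - 4 * A * C = -(M : ℤ)) : B % 2 = 1 := by
  rcases Int.even_or_odd B with ⟨j, rfl⟩ | hB
  · exfalso
    have h2 : (4 : ℤ) * (j ^ 2 - A * C) = -(M : ℤ) := by linear_combination h
    have h3 : (4 : ℤ) ∣ (M : ℤ) := ⟨-(j ^ 2 - A * C), by linarith⟩
    have h4 : (4 : ℕ) ∣ M := by exact_mod_cast h3
    omega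
  · obtain ⟨k, hk⟩ := hB
    omega

lemma reduced_facts {M : ℕ} {A B C : ℤ} (h : IsReducedForm M (A, B, C)) :
    0 < A ∧ -A ≤ B ∧ B ≤ A ∧ A ≤ C ∧ (B < 0 → -B < A ∧ A < C) := by
  rw [isReducedForm_mk] at h
  obtain ⟨hd, hA, hB, hAC, hbd⟩ := h
  have h1 := abs_le.mp hB
  refine ⟨hA, h1.1, h1.2, hAC, fun hneg => ?_⟩
  have habs : |B| = -B := abs_of_neg hneg
  constructor
  · rcases eq_or_lt_of_le (habs ▸ hB) with he | hlt
    · exact absurd (hbd (Or.inl (by rw [habs]; exact he))) (by omega)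
    · exact hlt
  · rcases eq_or_lt_of_le hAC with he | hlt
    · exact absurd (hbd (Or.inr he)) (by omega)
    · exact hlt

lemma rot3_mem {n : ℕ} {t : ℤ × ℤ × ℤ} (h : t ∈ oddTriples n) :
    rot3 t ∈ oddTriples n := by
  obtain ⟨p, q, r⟩ := t
  rw [mem_oddTriples] at h
  obtain ⟨hp, hq, hr, hodd, h1, h2, h3, heq⟩ := h
  rw [Int.odd_iff] at hodd
  show (q, r, p) ∈ oddTriples n
  rw [mem_oddTriples, Int.odd_iff]
  refine ⟨hq, hr, hp, by omega, by omega, by omega, by omega, by linear_combination heq⟩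

/-- Base membership: the image of a reduced form with `B ≥ 0`. -/
lemma base_mem {n : ℕ} (hn : 1 ≤ n) {A B C : ℤ}
    (hr : IsReducedForm (4 * n - 1) (A, B, C)) (hB : 0 ≤ B) :
    ((A + C - B, C, A) : ℤ × ℤ × ℤ) ∈ oddTriples n := by
  have hd := (isReducedForm_mk.mp hr).1
  rw [cast_M hn] at hd
  have hodd : B % 2 = 1 := by
    apply B_odd (M := 4 * n - 1) (by omega)
    rw [cast_M hn]
    exact hd
  obtain ⟨hA, hB1, hB2, hAC, hbd⟩ := reduced_facts hr
  rw [mem_oddTriples, Int.odd_iff]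
  refine ⟨by omega, by omega, by omega, by omega, by omega, by omega, by omega,
    by linear_combination -hd⟩

/-- Base membership: the image of a reduced form with `B < 0`. -/
lemma base_mem' {n : ℕ} (hn : 1 ≤ n) {A B C : ℤ}
    (hr : IsReducedForm (4 * n - 1) (A, B, C)) (hB : B < 0) :
    ((C, A + C + B, A) : ℤ × ℤ × ℤ) ∈ oddTriples n := by
  have hd := (isReducedForm_mk.mp hr).1
  rw [cast_M hn] at hd
  have hodd : B % 2 = 1 := by
    apply B_odd (M := 4 * n - 1) (by omega)
    rw [cast_M hn]
    exact hd
  obtain ⟨hA, hB1, hB2, hAC, hbd⟩ := reduced_facts hr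
  obtain ⟨hs1, hs2⟩ := hbd hB
  rw [mem_oddTriples, Int.odd_iff]
  refine ⟨by omega, by omega, by omega, by omega, by omega, by omega, by omega,
    by linear_combination -hd⟩

lemma fmap_subset {n : ℕ} (hn : 1 ≤ n) {r t : ℤ × ℤ × ℤ}
    (hr : IsReducedForm (4 * n - 1) r) (ht : t ∈ fmap r) : t ∈ oddTriples n := by
  obtain ⟨A, B, C⟩ := r
  simp only [fmap] at ht
  split_ifs at ht with hB
  · rw [mem_cyc3] at ht
    rcases ht with rfl | rfl | rfl
    · exact base_mem hn hr hB
    · exact rot3_mem (base_mem hn hr hB)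
    · exact rot3_mem (rot3_mem (base_mem hn hr hB))
  · rw [mem_cyc3] at ht
    push_neg at hB
    rcases ht with rfl | rfl | rfl
    · exact base_mem' hn hr hB
    · exact rot3_mem (base_mem' hn hr hB)
    · exact rot3_mem (rot3_mem (base_mem' hn hr hB))

/-- Even-permutation case of the coverage argument. -/
lemma even_case {n : ℕ} (hn : 1 ≤ n) (x y z : ℤ) (hx : 1 ≤ x) (hxy : x ≤ y)
    (hyz : y ≤ z) (hx2 : x % 2 = 1) (hy2 : y % 2 = 1) (hz2 : z % 2 = 1)
    (key : x * y + y * z + z * x = 4 * (n : ℤ) - 1) :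
    ∃ A C : ℤ, IsReducedForm (4 * n - 1) (A, x, C) ∧
      fmap (A, x, C) = cyc3 (A + C - x, C, A) ∧
      2 * (A + C - x) = y + z ∧ 2 * C = x + z ∧ 2 * A = x + y := by
  obtain ⟨A, hA⟩ : ∃ A : ℤ, 2 * A = x + y := ⟨(x + y) / 2, by omega⟩
  obtain ⟨C, hC⟩ : ∃ C : ℤ, 2 * C = x + z := ⟨(x + z) / 2, by omega⟩
  refine ⟨A, C, isReducedForm_mk.mpr ⟨?_, by omega, ?_, by omega, fun _ => by omega⟩,
    ?_, by omega, hC, hA⟩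
  · rw [cast_M hn]
    linear_combination (-1 : ℤ) * key + (-2 * C) * hA + (-(x + y)) * hC
  · rw [abs_of_nonneg (by omega)]
    omega
  · simp only [fmap, if_pos (by omega : (0 : ℤ) ≤ x)]

/-- Odd-permutation case of the coverage argument. -/
lemma odd_case {n : ℕ} (hn : 1 ≤ n) (x y z : ℤ) (hx : 1 ≤ x) (hxy : x < y)
    (hyz : y < z) (hx2 : x % 2 = 1) (hy2 : y % 2 = 1) (hz2 : z % 2 = 1)
    (key : x * y + y * z + z * x = 4 * (n : ℤ) - 1) :
    ∃ A C : ℤ, IsReducedForm (4 * n - 1) (A, -x, C) ∧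
      fmap (A, -x, C) = cyc3 (C, A + C - x, A) ∧
      2 * (A + C - x) = y + z ∧ 2 * C = x + z ∧ 2 * A = x + y := by
  obtain ⟨A, hA⟩ : ∃ A : ℤ, 2 * A = x + y := ⟨(x + y) / 2, by omega⟩
  obtain ⟨C, hC⟩ : ∃ C : ℤ, 2 * C = x + z := ⟨(x + z) / 2, by omega⟩
  refine ⟨A, C, isReducedForm_mk.mpr ⟨?_, by omega, ?_, by omega, fun hor => ?_⟩,
    ?_, by omega, hC, hA⟩
  · rw [cast_M hn]
    linear_combination (-1 : ℤ) * key + (-2 * C) * hA + (-(x + y)) * hC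
  · rw [abs_of_nonpos (by omega)]
    omega
  · exfalso
    rw [abs_of_nonpos (by omega)] at hor
    omega
  · simp only [fmap, if_neg (by omega : ¬(0 : ℤ) ≤ -x)]
    ring_nf

set_option maxHeartbeats 2000000 in
lemma coverage {n : ℕ} (hn : 1 ≤ n) {t : ℤ × ℤ × ℤ} (ht : t ∈ oddTriples n) :
    ∃ r : ℤ × ℤ × ℤ, IsReducedForm (4 * n - 1) r ∧ t ∈ fmap r := by
  obtain ⟨p, q, r⟩ := t
  rw [mem_oddTriples] at ht
  obtain ⟨hp, hq, hr, hodd, h1, h2, h3, heq⟩ := ht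
  rw [Int.odd_iff] at hodd
  set a := q + r - p with ha
  set b := p + r - q with hb
  set c := p + q - r with hc
  clear_value a b c
  have ha1 : 1 ≤ a := by omega
  have hb1 : 1 ≤ b := by omega
  have hc1 : 1 ≤ c := by omega
  have ha2 : a % 2 = 1 := by omega
  have hb2 : b % 2 = 1 := by omega
  have hc2 : c % 2 = 1 := by omega
  have key : a * b + b * c + c * a = 4 * (n : ℤ) - 1 := by
    rw [ha, hb, hc]; linear_combination heq
  rcases le_total a b with hab | hab <;> rcases le_total b c with hbc | hbc <;>
    rcases le_total a c with hac | hac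
  -- a ≤ b ≤ c
  · obtain ⟨A, C, hred, hfm, e1, e2, e3⟩ := even_case hn a b c ha1 hab hbc ha2 hb2 hc2
      (by linear_combination key)
    exact ⟨(A, a, C), hred, by rw [hfm, mem_cyc3]; simp only [rot3, Prod.mk.injEq]; exact Or.inl ⟨by omega, by omega, by omega⟩⟩
  -- a ≤ b, b ≤ c, c ≤ a : all equal
  · obtain ⟨A, C, hred, hfm, e1, e2, e3⟩ := even_case hn a b c ha1 hab hbc ha2 hb2 hc2
      (by linear_combination key)
    exact ⟨(A, a, C), hred, by rw [hfm, mem_cyc3]; simp only [rot3, Prod.mk.injEq]; exact Or.inl ⟨by omega, by omega, by omega⟩⟩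
  -- a ≤ b, c ≤ b, a ≤ c : sorted a ≤ c ≤ b (odd perm, with ties going even)
  · rcases eq_or_lt_of_le hac with heq1 | hlt1
    · -- a = c : c ≤ a ≤ b, even case (c, a, b)
      obtain ⟨A, C, hred, hfm, e1, e2, e3⟩ := even_case hn c a b hc1 (by omega) hab hc2 ha2 hb2
        (by linear_combination key)
      exact ⟨(A, c, C), hred, by rw [hfm, mem_cyc3]; simp only [rot3, Prod.mk.injEq]; exact Or.inr (Or.inl ⟨by omega, by omega, by omega⟩)⟩
    · rcases eq_or_lt_of_le hbc with heq2 | hlt2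
      · -- c = b : a ≤ b ≤ c, even case
        obtain ⟨A, C, hred, hfm, e1, e2, e3⟩ := even_case hn a b c ha1 hab (by omega) ha2 hb2 hc2
          (by linear_combination key)
        exact ⟨(A, a, C), hred, by rw [hfm, mem_cyc3]; simp only [rot3, Prod.mk.injEq]; exact Or.inl ⟨by omega, by omega, by omega⟩⟩
      · -- strict a < c < b : odd case (a, c, b)
        obtain ⟨A, C, hred, hfm, e1, e2, e3⟩ := odd_case hn a c b ha1 hlt1 hlt2 ha2 hc2 hb2
          (by linear_combination key)
        exact ⟨(A, -a, C), hred, by rw [hfm, mem_cyc3]; simp only [rot3, Prod.mk.injEq]; exact Or.inr (Or.inl ⟨by omega, by omega, by omega⟩)⟩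
  -- a ≤ b, c ≤ b, c ≤ a : sorted c ≤ a ≤ b, even case (c, a, b)
  · obtain ⟨A, C, hred, hfm, e1, e2, e3⟩ := even_case hn c a b hc1 hac hab hc2 ha2 hb2
      (by linear_combination key)
    exact ⟨(A, c, C), hred, by rw [hfm, mem_cyc3]; simp only [rot3, Prod.mk.injEq]; exact Or.inr (Or.inl ⟨by omega, by omega, by omega⟩)⟩
  -- b ≤ a, b ≤ c, a ≤ c : sorted b ≤ a ≤ c (odd perm, ties go even)
  · rcases eq_or_lt_of_le hab with heq1 | hlt1
    · -- a = b : a ≤ b ≤ c even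
      obtain ⟨A, C, hred, hfm, e1, e2, e3⟩ := even_case hn a b c ha1 (by omega) hbc ha2 hb2 hc2
        (by linear_combination key)
      exact ⟨(A, a, C), hred, by rw [hfm, mem_cyc3]; simp only [rot3, Prod.mk.injEq]; exact Or.inl ⟨by omega, by omega, by omega⟩⟩
    · rcases eq_or_lt_of_le hac with heq2 | hlt2
      · -- a = c : b ≤ c ≤ a even case (b, c, a)
        obtain ⟨A, C, hred, hfm, e1, e2, e3⟩ := even_case hn b c a hb1 hbc (by omega) hb2 hc2 ha2
          (by linear_combination key)
        exact ⟨(A, b, C), hred, by rw [hfm, mem_cyc3]; simp only [rot3, Prod.mk.injEq]; exact Or.inr (Or.inr ⟨by omega, by omega, by omega⟩)⟩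
      · -- strict b < a < c : odd case (b, a, c)
        obtain ⟨A, C, hred, hfm, e1, e2, e3⟩ := odd_case hn b a c hb1 hlt1 hlt2 hb2 ha2 hc2
          (by linear_combination key)
        exact ⟨(A, -b, C), hred, by rw [hfm, mem_cyc3]; simp only [rot3, Prod.mk.injEq]; exact Or.inl ⟨by omega, by omega, by omega⟩⟩
  -- b ≤ a, b ≤ c, c ≤ a : sorted b ≤ c ≤ a, even case (b, c, a)
  · obtain ⟨A, C, hred, hfm, e1, e2, e3⟩ := even_case hn b c a hb1 hbc hac hb2 hc2 ha2
      (by linear_combination key)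
    exact ⟨(A, b, C), hred, by rw [hfm, mem_cyc3]; simp only [rot3, Prod.mk.injEq]; exact Or.inr (Or.inr ⟨by omega, by omega, by omega⟩)⟩
  -- b ≤ a, c ≤ b, a ≤ c : all equal, even
  · obtain ⟨A, C, hred, hfm, e1, e2, e3⟩ := even_case hn a b c ha1 (by omega) (by omega) ha2 hb2 hc2
      (by linear_combination key)
    exact ⟨(A, a, C), hred, by rw [hfm, mem_cyc3]; simp only [rot3, Prod.mk.injEq]; exact Or.inl ⟨by omega, by omega, by omega⟩⟩
  -- b ≤ a, c ≤ b, c ≤ a : sorted c ≤ b ≤ a (odd perm, ties go even)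
  · rcases eq_or_lt_of_le hbc with heq1 | hlt1
    · -- b = c : b ≤ c ≤ a even case (b, c, a)
      obtain ⟨A, C, hred, hfm, e1, e2, e3⟩ := even_case hn b c a hb1 (by omega) hac hb2 hc2 ha2
        (by linear_combination key)
      exact ⟨(A, b, C), hred, by rw [hfm, mem_cyc3]; simp only [rot3, Prod.mk.injEq]; exact Or.inr (Or.inr ⟨by omega, by omega, by omega⟩)⟩
    · rcases eq_or_lt_of_le hab with heq2 | hlt2
      · -- a = b : c ≤ a ≤ b even case (c, a, b)
        obtain ⟨A, C, hred, hfm, e1, e2, e3⟩ := even_case hn c a b hc1 (by omega) (by omega) hc2 ha2 hb2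
          (by linear_combination key)
        exact ⟨(A, c, C), hred, by rw [hfm, mem_cyc3]; simp only [rot3, Prod.mk.injEq]; exact Or.inr (Or.inl ⟨by omega, by omega, by omega⟩)⟩
      · -- strict c < b < a : odd case (c, b, a)
        obtain ⟨A, C, hred, hfm, e1, e2, e3⟩ := odd_case hn c b a hc1 hlt1 hlt2 hc2 hb2 ha2
          (by linear_combination key)
        exact ⟨(A, -c, C), hred, by rw [hfm, mem_cyc3]; simp only [rot3, Prod.mk.injEq]; exact Or.inr (Or.inr ⟨by omega, by omega, by omega⟩)⟩

set_option maxHeartbeats 2000000 in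
lemma fmap_inj {M : ℕ} {r r' t : ℤ × ℤ × ℤ}
    (h : IsReducedForm M r) (h' : IsReducedForm M r')
    (ht : t ∈ fmap r) (ht' : t ∈ fmap r') : r = r' := by
  obtain ⟨A, B, C⟩ := r
  obtain ⟨A', B', C'⟩ := r'
  obtain ⟨t1, t2, t3⟩ := t
  obtain ⟨hA, hB1, hB2, hAC, hbd⟩ := reduced_facts h
  obtain ⟨hA', hB1', hB2', hAC', hbd'⟩ := reduced_facts h'
  simp only [fmap] at ht ht'
  split_ifs at ht ht' with hB hB' hB' <;>
    rw [mem_cyc3] at ht ht' <;>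
    simp only [rot3, Prod.mk.injEq] at ht ht' <;>
    simp only [Prod.mk.injEq] <;>
    omega

lemma fmap_card {M : ℕ} (hM : M % 2 = 1) {r : ℤ × ℤ × ℤ}
    (h : IsReducedForm M r) : ((fmap r).card : ℚ) = 3 * formWeight r := by
  obtain ⟨A, B, C⟩ := r
  have hodd : B % 2 = 1 := B_odd hM (isReducedForm_mk.mp h).1
  obtain ⟨hA, hB1, hB2, hAC, hbd⟩ := reduced_facts h
  rw [formWeight]
  by_cases h1 : A = B ∧ A = C
  · obtain ⟨rfl, rfl⟩ : A = B ∧ A = C := h1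
    rw [if_pos ⟨rfl, rfl⟩]
    have : fmap (A, A, A) = {(A, A, A)} := by
      simp only [fmap, if_pos (le_of_lt hA), cyc3, rot3]
      have : A + A - A = A := by ring
      rw [this]
      simp
    rw [this]
    norm_num
  · rw [if_neg h1, if_neg (by rintro ⟨rfl, -⟩; omega)]
    have hcard : (fmap (A, B, C)).card = 3 := by
      by_cases hB : 0 ≤ B
      · simp only [fmap, if_pos hB, cyc3, rot3]
        rw [Finset.card_insert_of_notMem, Finset.card_insert_of_notMem,
          Finset.card_singleton]
        · simp only [Finset.mem_singleton, Prod.mk.injEq]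
          omega
        · simp only [Finset.mem_insert, Finset.mem_singleton, Prod.mk.injEq]
          omega
      · have hBneg : B < 0 := by omega
        obtain ⟨hs1, hs2⟩ := hbd hBneg
        simp only [fmap, if_neg hB, cyc3, rot3]
        rw [Finset.card_insert_of_notMem, Finset.card_insert_of_notMem,
          Finset.card_singleton]
        · simp only [Finset.mem_singleton, Prod.mk.injEq]
          omega
        · simp only [Finset.mem_insert, Finset.mem_singleton, Prod.mk.injEq]
          omega
    rw [hcard]
    norm_num

lemma reduced_finite (M : ℕ) : {t : ℤ × ℤ × ℤ | IsReducedForm M t}.Finite := by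
  apply Set.Finite.subset
    (Set.finite_Icc ((0 : ℤ), -(M : ℤ), (0 : ℤ)) ((M : ℤ), (M : ℤ), (M : ℤ)))
  rintro ⟨A, B, C⟩ hmem
  rw [Set.mem_setOf_eq, isReducedForm_mk] at hmem
  obtain ⟨hd, hA, hB, hAC, -⟩ := hmem
  have hM0 : (0 : ℤ) ≤ (M : ℤ) := Int.natCast_nonneg M
  have e1 : |B| * |B| ≤ A * A := mul_le_mul hB hB (abs_nonneg B) hA.le
  have e2 : A * A ≤ A * C := mul_le_mul_of_nonneg_left hAC hA.le
  have e3 : |B| * |B| = B ^ 2 := by rw [abs_mul_abs_self]; ring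
  have h1 : B ^ 2 ≤ A * C := by linarith
  have h2 : 3 * (A * C) ≤ (M : ℤ) := by linarith
  have hC0 : 0 < C := lt_of_lt_of_le hA hAC
  have h3 : 1 * C ≤ A * C := mul_le_mul_of_nonneg_right (by omega) hC0.le
  have hCM : C ≤ (M : ℤ) := by linarith
  have hBabs := abs_le.mp hB
  simp only [Set.mem_Icc, Prod.le_def]
  exact ⟨⟨by omega, by omega, by omega⟩, ⟨by omega, by omega, by omega⟩⟩

/-- The `c₁ = 1` Vafa–Witten count on `ℙ²`: for every `n ≥ 1` the number of
such triples is `3·H(4n − 1)`; in particular for `n = 1` the unique such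
triple is `(1,1,1)`, and `3·H(3) = 1`. -/
theorem stmt_17 :
    (∀ n : ℕ, 1 ≤ n → ((oddTriples n).ncard : ℚ) = 3 * hurwitzH (4 * n - 1)) ∧
    oddTriples 1 = {(1, 1, 1)} ∧ 3 * hurwitzH 3 = 1 := by
  have main : ∀ n : ℕ, 1 ≤ n → ((oddTriples n).ncard : ℚ) = 3 * hurwitzH (4 * n - 1) := by
    intro n hn
    have hM2 : (4 * n - 1) % 2 = 1 := by omega
    have hfin := reduced_finite (4 * n - 1)
    have hset : oddTriples n = ↑(hfin.toFinset.biUnion fmap) := by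
      ext t
      simp only [Finset.coe_biUnion, Set.mem_iUnion, Finset.mem_coe,
        Set.Finite.mem_toFinset, Set.mem_setOf_eq]
      constructor
      · intro ht
        obtain ⟨r, hr, htr⟩ := coverage hn ht
        exact ⟨r, hr, htr⟩
      · rintro ⟨r, hr, htr⟩
        exact fmap_subset hn hr htr
    have hdisj : ∀ x ∈ hfin.toFinset, ∀ y ∈ hfin.toFinset, x ≠ y →
        Disjoint (fmap x) (fmap y) := by
      intro x hx y hy hxy
      rw [Finset.disjoint_left]
      intro t htx hty
      exact hxy (fmap_inj (hfin.mem_toFinset.mp hx) (hfin.mem_toFinset.mp hy) htx hty)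
    rw [hset, Set.ncard_coe_finset, Finset.card_biUnion hdisj]
    unfold hurwitzH
    rw [if_neg (by omega : ¬(4 * n - 1 = 0)),
      finsum_mem_eq_finite_toFinset_sum _ hfin, Finset.mul_sum]
    push_cast
    apply Finset.sum_congr rfl
    intro r hr
    exact fmap_card hM2 (hfin.mem_toFinset.mp hr)
  have h2 : oddTriples 1 = {((1 : ℤ), (1 : ℤ), (1 : ℤ))} := by
    ext ⟨p, q, r⟩
    simp only [oddTriples, Set.mem_setOf_eq, Set.mem_singleton_iff, Prod.mk.injEq]
    constructor
    · rintro ⟨hp, hq, hr, hodd, ht1, ht2, ht3, heq⟩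
      have key : (q + r - p) * (p + r - q) + (p + r - q) * (p + q - r)
          + (p + q - r) * (q + r - p) = 3 := by
        push_cast at heq
        linear_combination heq
      have ha : 1 ≤ q + r - p := by omega
      have hb : 1 ≤ p + r - q := by omega
      have hc : 1 ≤ p + q - r := by omega
      have e1 : 1 * 1 ≤ (p + r - q) * (p + q - r) := mul_le_mul hb hc (by omega) (by omega)
      have e2 : 1 * 1 ≤ (q + r - p) * (p + r - q) := mul_le_mul ha hb (by omega) (by omega)
      have e3 : 1 * 1 ≤ (p + q - r) * (q + r - p) := mul_le_mul hc ha (by omega) (by omega)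
      have ua : q + r - p ≤ 1 := by nlinarith
      have ub : p + r - q ≤ 1 := by nlinarith
      have uc : p + q - r ≤ 1 := by nlinarith
      refine ⟨by omega, by omega, by omega⟩
    · rintro ⟨rfl, rfl, rfl⟩
      refine ⟨by norm_num, by norm_num, by norm_num, ⟨1, by norm_num⟩,
        by norm_num, by norm_num, by norm_num, by norm_num⟩
  have h3 : 3 * hurwitzH 3 = 1 := by
    have hm := main 1 (le_refl 1)
    rw [h2] at hm
    norm_num [Set.ncard_singleton] at hm
    linarith
  exact ⟨main, h2, h3⟩
end
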